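/- Suppose A ∈ ℝ^{M×N} satisfies Spark(A) = M+1 and N(A) contains no nonzero vector all of whose nonzero entries have equal magnitude. Then for every k ≤ M, γ(ℓ_p, A, k) is strictly increasing in p on [0,1]: for 0 ≤ p < q ≤ 1, γ(ℓ_p, A, k) < γ(ℓ_q, A, k). -/
import Mathlib


open Finset MeasureTheory Filter

/-- `phi p x = |x|^p`, with the convention `|x|^0 = 1` for `x ≠ 0` and `phi p 0 = 0`. -/
noncomputable def phi (p x : ℝ) : ℝ := if x = 0 then 0 else |x| ^ p

open Classical in
/-- support of a vector, as a finset -/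
noncomputable def supp {n : ℕ} (z : Fin n → ℝ) : Finset (Fin n) :=
  Finset.univ.filter (fun i => z i ≠ 0)

/-- `Spark(A) = s`: some `s` columns are linearly dependent (a kernel vector with support of
size `s`), and every nonzero kernel vector has support of size at least `s`. -/
def sparkEq {m n : ℕ} (A : Matrix (Fin m) (Fin n) ℝ) (s : ℕ) : Prop :=
  (∃ z, A.mulVec z = 0 ∧ z ≠ 0 ∧ (supp z).card = s) ∧
  (∀ z, A.mulVec z = 0 → z ≠ 0 → s ≤ (supp z).card)

/-- The set of constants `γ` satisfying the null space property inequality at level `k`. -/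
def validNSC {m n : ℕ} (A : Matrix (Fin m) (Fin n) ℝ) (p : ℝ) (k : ℕ) : Set ℝ :=
  {γ | ∀ S : Finset (Fin n), S.card ≤ k → ∀ z, A.mulVec z = 0 →
    ∑ i ∈ S, phi p (z i) ≤ γ * ∑ i ∈ Sᶜ, phi p (z i)}

/-- The null space constant `γ(ℓ_p, A, k)`: the smallest valid constant. -/
noncomputable def gammaNSC {m n : ℕ} (A : Matrix (Fin m) (Fin n) ℝ) (p : ℝ) (k : ℕ) : ℝ :=
  sInf (validNSC A p k)

/-- The ratio `θ(p, z, S)`. -/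
noncomputable def theta {n : ℕ} (p : ℝ) (z : Fin n → ℝ) (S : Finset (Fin n)) : ℝ :=
  (∑ i ∈ S, phi p (z i)) / (∑ i ∈ Sᶜ, phi p (z i))

set_option maxHeartbeats 800000

lemma phi_nonneg (p x : ℝ) : 0 ≤ phi p x := by
  unfold phi; split
  · exact le_refl 0
  · positivity

lemma phi_pos (p : ℝ) {x : ℝ} (hx : x ≠ 0) : 0 < phi p x := by
  unfold phi; rw [if_neg hx]; exact Real.rpow_pos_of_pos (abs_pos.2 hx) p

lemma phi_mono {p : ℝ} (hp : 0 ≤ p) {x y : ℝ} (h : |x| ≤ |y|) : phi p x ≤ phi p y := by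
  rcases eq_or_ne x 0 with rfl | hx
  · simpa [phi] using phi_nonneg p y
  · have hy : y ≠ 0 := by
      intro hy; rw [hy] at h; simp at h; exact hx h
    unfold phi
    rw [if_neg hx, if_neg hy]
    exact Real.rpow_le_rpow (abs_nonneg x) h hp

lemma phi_mul (p : ℝ) {c : ℝ} (hc : c ≠ 0) (x : ℝ) : phi p (c * x) = |c| ^ p * phi p x := by
  unfold phi
  rcases eq_or_ne x 0 with rfl | hx
  · simp
  · rw [if_neg (mul_ne_zero hc hx), if_neg hx, abs_mul,
      Real.mul_rpow (abs_nonneg c) (abs_nonneg x)]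

lemma theta_smul {N : ℕ} (p : ℝ) {c : ℝ} (hc : c ≠ 0) (z : Fin N → ℝ) (S : Finset (Fin N)) :
    theta p (c • z) S = theta p z S := by
  have hcp : (0:ℝ) < |c| ^ p := Real.rpow_pos_of_pos (abs_pos.2 hc) p
  unfold theta
  simp only [Pi.smul_apply, smul_eq_mul, phi_mul p hc, ← Finset.mul_sum]
  exact mul_div_mul_left _ _ (ne_of_gt hcp)

lemma sum_phi_zero {N : ℕ} (z : Fin N → ℝ) (S : Finset (Fin N)) :
    ∑ i ∈ S, phi 0 (z i) = ((S ∩ supp z).card : ℝ) := by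
  classical
  have h1 : ∀ i, phi 0 (z i) = if z i ≠ 0 then (1:ℝ) else 0 := by
    intro i; unfold phi
    rcases eq_or_ne (z i) 0 with h | h <;> simp [h]
  simp_rw [h1]
  rw [Finset.sum_boole]
  congr 1
  rw [show S ∩ supp z = S.filter (fun i => z i ≠ 0) from ?_]
  ext i; simp [supp]

lemma exists_topk {N : ℕ} (f : Fin N → ℝ) (k : ℕ) (hk : k ≤ N) :
    ∃ S : Finset (Fin N), S.card = k ∧ ∀ i ∈ S, ∀ j ∉ S, f j ≤ f i := by
  induction k with
  | zero => exact ⟨∅, rfl, by simp⟩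
  | succ k ih =>
    obtain ⟨S, hcard, hprop⟩ := ih (Nat.le_of_succ_le hk)
    have hne : (Sᶜ : Finset (Fin N)).Nonempty := by
      rw [← Finset.card_pos, Finset.card_compl, hcard]
      simp only [Fintype.card_fin]
      omega
    obtain ⟨j, hjmem, hjmax⟩ := Finset.exists_max_image Sᶜ f hne
    refine ⟨insert j S, ?_, ?_⟩
    · rw [Finset.card_insert_of_notMem (Finset.mem_compl.1 hjmem), hcard]
    · intro i hi l hl
      rcases Finset.mem_insert.1 hi with rfl | hi
      · exact hjmax l (Finset.mem_compl.2 fun hlS => hl (Finset.mem_insert_of_mem hlS))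
      · exact hprop i hi l (fun hlS => hl (Finset.mem_insert_of_mem hlS))

lemma topk_sum_ge {N : ℕ} (f : Fin N → ℝ) (hf : ∀ i, 0 ≤ f i)
    {S T : Finset (Fin N)} (hT : ∀ i ∈ T, ∀ j ∉ T, f j ≤ f i)
    (hcard : S.card ≤ T.card) :
    ∑ i ∈ S, f i ≤ ∑ i ∈ T, f i := by
  classical
  have h1 : ∑ i ∈ S, f i = ∑ i ∈ S ∩ T, f i + ∑ i ∈ S \ T, f i := by
    rw [Finset.sum_inter_add_sum_sdiff]
  have h2 : ∑ i ∈ T, f i = ∑ i ∈ T ∩ S, f i + ∑ i ∈ T \ S, f i := by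
    rw [Finset.sum_inter_add_sum_sdiff]
  rw [h1, h2, Finset.inter_comm S T]
  have hcd : (S \ T).card ≤ (T \ S).card := by
    have := Finset.card_inter_add_card_sdiff S T
    have := Finset.card_inter_add_card_sdiff T S
    rw [Finset.inter_comm T S] at this
    omega
  rcases Finset.eq_empty_or_nonempty (T \ S) with he | hne
  · have h0 : (T \ S).card = 0 := by rw [he]; rfl
    have : S \ T = ∅ := Finset.card_eq_zero.1 (by omega)
    rw [this, he]
  · obtain ⟨b, hb, hbmin⟩ := Finset.exists_min_image (T \ S) f hne
    have hb0 : 0 ≤ f b := hf b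
    have hle1 : ∑ i ∈ S \ T, f i ≤ (S \ T).card • f b := by
      apply Finset.sum_le_card_nsmul
      intro j hj
      exact hT b (Finset.mem_sdiff.1 hb).1 j (Finset.mem_sdiff.1 hj).2
    have hle2 : (T \ S).card • f b ≤ ∑ i ∈ T \ S, f i := by
      apply Finset.card_nsmul_le_sum
      intro j hj
      exact hbmin j hj
    have hle3 : ((S \ T).card : ℝ) * f b ≤ ((T \ S).card : ℝ) * f b := by
      apply mul_le_mul_of_nonneg_right _ hb0
      exact_mod_cast hcd
    simp only [nsmul_eq_mul] at hle1 hle2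
    linarith

lemma mem_supp_iff {n : ℕ} {z : Fin n → ℝ} {i : Fin n} : i ∈ supp z ↔ z i ≠ 0 := by
  simp [supp]

lemma ker_denom_pos {M N : ℕ} {A : Matrix (Fin M) (Fin N) ℝ} (hspark : sparkEq A (M+1))
    {k : ℕ} (hk : k ≤ M) {z : Fin N → ℝ} (hz : A.mulVec z = 0) (hz0 : z ≠ 0)
    {S : Finset (Fin N)} (hS : S.card ≤ k) (p : ℝ) :
    0 < ∑ i ∈ Sᶜ, phi p (z i) := by
  obtain ⟨i, hi, hiS⟩ : ∃ i, z i ≠ 0 ∧ i ∉ S := by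
    by_contra h
    push_neg at h
    have hsub : supp z ⊆ S := fun i hi => h i (mem_supp_iff.1 hi)
    have h1 := hspark.2 z hz hz0
    have h2 := Finset.card_le_card hsub
    omega
  exact Finset.sum_pos' (fun j _ => phi_nonneg p (z j))
    ⟨i, Finset.mem_compl.2 hiS, phi_pos p hi⟩

lemma gammaNSC_eq {M N : ℕ} {A : Matrix (Fin M) (Fin N) ℝ} (hspark : sparkEq A (M+1))
    {k : ℕ} (hk : k ≤ M) {p : ℝ} {z : Fin N → ℝ} {S : Finset (Fin N)}
    (hz : A.mulVec z = 0) (hz0 : z ≠ 0) (hS : S.card ≤ k)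
    (hmax : ∀ z' (S' : Finset (Fin N)), A.mulVec z' = 0 → z' ≠ 0 → S'.card ≤ k →
      theta p z' S' ≤ theta p z S) :
    sInf (validNSC A p k) = theta p z S := by
  have hmem : theta p z S ∈ validNSC A p k := by
    intro S' hS' z' hz'
    rcases eq_or_ne z' 0 with rfl | hz'0
    · simp [phi]
    · have hden := ker_denom_pos hspark hk hz' hz'0 hS' p
      have h := hmax z' S' hz' hz'0 hS'
      unfold theta at h
      exact (div_le_iff₀ hden).1 h
  have hlb : ∀ γ ∈ validNSC A p k, theta p z S ≤ γ := by
    intro γ hγ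
    have hden := ker_denom_pos hspark hk hz hz0 hS p
    have h := hγ S hS z hz
    unfold theta
    rw [div_le_iff₀ hden]
    exact h
  exact le_antisymm (csInf_le ⟨_, hlb⟩ hmem) (le_csInf ⟨_, hmem⟩ hlb)

lemma div_lt_div_strict {a b c d : ℝ} (hab : a ≤ b) (hdc : d ≤ c) (h0a : 0 < a) (h0d : 0 < d)
    (hstrict : a < b ∨ d < c) : a / c < b / d := by
  rw [div_lt_div_iff₀ (lt_of_lt_of_le h0d hdc) h0d]
  rcases hstrict with h | h <;> nlinarith

lemma phi_eq_of_pos {p : ℝ} (hp : 0 < p) (x : ℝ) : phi p x = |x| ^ p := by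
  unfold phi
  rcases eq_or_ne x 0 with rfl | hx
  · simp [Real.zero_rpow (ne_of_gt hp)]
  · rw [if_neg hx]

lemma continuous_phi {p : ℝ} (hp : 0 < p) : Continuous (phi p) := by
  have : (phi p) = fun x => |x| ^ p := funext (phi_eq_of_pos hp)
  rw [this]
  rw [continuous_iff_continuousAt]
  intro x
  exact (Real.continuousAt_rpow_const _ _ (Or.inr hp.le)).comp (continuous_abs.continuousAt)

lemma exists_max_theta {M N : ℕ} {A : Matrix (Fin M) (Fin N) ℝ} (hspark : sparkEq A (M+1))
    {k : ℕ} (hk1 : 1 ≤ k) (hk : k ≤ M) {p : ℝ} (hp : 0 ≤ p) :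
    ∃ (z : Fin N → ℝ) (S : Finset (Fin N)), A.mulVec z = 0 ∧ z ≠ 0 ∧ S.card ≤ k ∧
      ∀ z' (S' : Finset (Fin N)), A.mulVec z' = 0 → z' ≠ 0 → S'.card ≤ k →
        theta p z' S' ≤ theta p z S := by
  classical
  obtain ⟨z0, hz0k, hz00, hz0c⟩ := hspark.1
  rcases eq_or_lt_of_le hp with rfl | hppos
  · -- p = 0 : finitely many values
    have hval : ∀ (z : Fin N → ℝ) (S : Finset (Fin N)),
        theta 0 z S = ((S ∩ supp z).card : ℝ) / ((Sᶜ ∩ supp z).card : ℝ) := by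
      intro z S
      unfold theta
      rw [sum_phi_zero, sum_phi_zero]
    set g : Finset (Fin N) × Finset (Fin N) → ℝ :=
      fun TS => ((TS.2 ∩ TS.1).card : ℝ) / (((TS.2)ᶜ ∩ TS.1).card : ℝ) with hg
    set F : Finset (Finset (Fin N) × Finset (Fin N)) :=
      Finset.univ.filter (fun TS => (∃ z, A.mulVec z = 0 ∧ z ≠ 0 ∧ supp z = TS.1) ∧
        TS.2.card ≤ k) with hF
    have hFne : F.Nonempty := by
      refine ⟨(supp z0, ∅), ?_⟩
      rw [hF, Finset.mem_filter]
      exact ⟨Finset.mem_univ _, ⟨z0, hz0k, hz00, rfl⟩, by simp⟩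
    obtain ⟨TS, hTSmem, hTSmax⟩ := Finset.exists_max_image F g hFne
    rw [hF, Finset.mem_filter] at hTSmem
    obtain ⟨-, ⟨z, hz, hz0, hsupp⟩, hScard⟩ := hTSmem
    refine ⟨z, TS.2, hz, hz0, hScard, ?_⟩
    intro z' S' hz' hz'0 hS'
    rw [hval, hval, hsupp]
    have : (supp z', S') ∈ F := by
      rw [hF, Finset.mem_filter]
      exact ⟨Finset.mem_univ _, ⟨z', hz', hz'0, rfl⟩, hS'⟩
    have h2 := hTSmax _ this
    simp only [hg] at h2
    exact h2
  · -- p > 0 : compactness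
    have key : ∀ S : Finset (Fin N), S.card ≤ k → ∃ z, A.mulVec z = 0 ∧ z ≠ 0 ∧
        ∀ y, A.mulVec y = 0 → y ≠ 0 → theta p y S ≤ theta p z S := by
      intro S hS
      set K : Set (Fin N → ℝ) := {z | A.mulVec z = 0 ∧ ‖z‖ = 1} with hK
      have hKclosed : IsClosed K := by
        apply IsClosed.inter
        · exact isClosed_eq (A.mulVecLin.continuous_of_finiteDimensional) continuous_const
        · exact isClosed_eq continuous_norm continuous_const
      have hKbdd : Bornology.IsBounded K := by
        apply (Metric.isBounded_closedBall (x := (0 : Fin N → ℝ)) (r := 1)).subset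
        intro z hz
        simp only [Metric.mem_closedBall, dist_zero_right]
        exact le_of_eq hz.2
      have hKcompact : IsCompact K := Metric.isCompact_of_isClosed_isBounded hKclosed hKbdd
      have hKne : K.Nonempty := by
        refine ⟨‖z0‖⁻¹ • z0, ?_, ?_⟩
        · rw [Matrix.mulVec_smul, hz0k, smul_zero]
        · rw [norm_smul, norm_inv, norm_norm, inv_mul_cancel₀ (norm_ne_zero_iff.2 hz00)]
      have hcont : ContinuousOn (fun z => theta p z S) K := by
        apply ContinuousOn.div
        · exact (continuous_finset_sum S fun i _ =>
            (continuous_phi hppos).comp (continuous_apply i)).continuousOn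
        · exact (continuous_finset_sum Sᶜ fun i _ =>
            (continuous_phi hppos).comp (continuous_apply i)).continuousOn
        · intro z hz
          exact ne_of_gt (ker_denom_pos hspark hk hz.1 (norm_ne_zero_iff.1 (by rw [hz.2]; norm_num)) hS p)
      obtain ⟨z, hzK, hzmax⟩ := hKcompact.exists_isMaxOn hKne hcont
      refine ⟨z, hzK.1, norm_ne_zero_iff.1 (by rw [hzK.2]; norm_num), ?_⟩
      intro y hy hy0
      have h1 : theta p y S = theta p (‖y‖⁻¹ • y) S :=
        (theta_smul p (inv_ne_zero (norm_ne_zero_iff.2 hy0)) y S).symm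
      rw [h1]
      apply hzmax
      refine ⟨by rw [Matrix.mulVec_smul, hy, smul_zero], ?_⟩
      rw [norm_smul, norm_inv, norm_norm, inv_mul_cancel₀ (norm_ne_zero_iff.2 hy0)]
    choose f hf1 hf2 hf3 using key
    set F : Finset (Finset (Fin N)) := Finset.univ.filter (fun S => S.card ≤ k) with hF
    have hFne : F.Nonempty := ⟨∅, by rw [hF, Finset.mem_filter]; exact ⟨Finset.mem_univ _, by simp⟩⟩
    have hmemF : ∀ S ∈ F, S.card ≤ k := by
      intro S hS; rw [hF, Finset.mem_filter] at hS; exact hS.2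
    obtain ⟨Smax, hSmem, hSmax⟩ := Finset.exists_max_image F
      (fun S => if h : S.card ≤ k then theta p (f S h) S else 0) hFne
    have hSk := hmemF Smax hSmem
    refine ⟨f Smax hSk, Smax, hf1 Smax hSk, hf2 Smax hSk, hSk, ?_⟩
    intro z' S' hz' hz'0 hS'
    have h1 : theta p z' S' ≤ theta p (f S' hS') S' := hf3 S' hS' z' hz' hz'0
    have h2 := hSmax S' (by rw [hF, Finset.mem_filter]; exact ⟨Finset.mem_univ _, hS'⟩)
    rw [dif_pos hS', dif_pos hSk] at h2
    exact le_trans h1 h2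

/-- if Spark(A) = M+1 and the null space of A contains no nonzero vector
whose nonzero entries all have equal magnitude, then for 1 ≤ k ≤ M the null space constant
is strictly increasing in p on [0,1]. -/
theorem stmt19 {M N : ℕ} (A : Matrix (Fin M) (Fin N) ℝ) (hspark : sparkEq A (M + 1))
    (hker : ∀ z : Fin N → ℝ, A.mulVec z = 0 → z ≠ 0 →
      ¬ (∀ i j : Fin N, z i ≠ 0 → z j ≠ 0 → |z i| = |z j|))
    (k : ℕ) (hk1 : 1 ≤ k) (hk : k ≤ M) (p q : ℝ) (hp : 0 ≤ p) (hpq : p < q) (hq : q ≤ 1) :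
    gammaNSC A p k < gammaNSC A q k := by
  classical
  unfold gammaNSC
  obtain ⟨zp, Sp, hzp, hzp0, hSp, hmaxp⟩ := exists_max_theta hspark hk1 hk hp
  have hq0 : (0:ℝ) ≤ q := le_trans hp (le_of_lt hpq)
  obtain ⟨zq, Sq, hzq, hzq0, hSq, hmaxq⟩ := exists_max_theta hspark hk1 hk hq0
  have hgp : sInf (validNSC A p k) = theta p zp Sp := gammaNSC_eq hspark hk hzp hzp0 hSp hmaxp
  have hgq : sInf (validNSC A q k) = theta q zq Sq := gammaNSC_eq hspark hk hzq hzq0 hSq hmaxq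
  have hkN : k ≤ N := by
    obtain ⟨z0, hz0k, hz00, hz0c⟩ := hspark.1
    have h1 := Finset.card_le_univ (supp z0)
    simp only [Finset.card_univ, Fintype.card_fin] at h1
    omega
  obtain ⟨T, hTcard, hTtop⟩ := exists_topk (fun i => |zp i|) k hkN
  have hTk : T.card ≤ k := le_of_eq hTcard
  have hTne : T.Nonempty := Finset.card_pos.1 (by omega)
  obtain ⟨i0, hi0T, hi0min⟩ := Finset.exists_min_image T (fun i => |zp i|) hTne
  have ht : 0 < |zp i0| := by
    rcases lt_or_eq_of_le (abs_nonneg (zp i0)) with h | h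
    · exact h
    · exfalso
      have hsub : supp zp ⊆ T := by
        intro j hj
        by_contra hjT
        have h1 : |zp j| ≤ |zp i0| := hTtop i0 hi0T j hjT
        rw [← h] at h1
        exact mem_supp_iff.1 hj (abs_eq_zero.1 (le_antisymm h1 (abs_nonneg _)))
      have h1 := hspark.2 zp hzp hzp0
      have h2 := Finset.card_le_card hsub
      omega
  set t := |zp i0| with hd
  have htne : t ≠ 0 := ne_of_gt ht
  -- step 1: pass to the top-k set T
  have hstep1 : theta p zp Sp ≤ theta p zp T := by
    have hnum : ∑ i ∈ Sp, phi p (zp i) ≤ ∑ i ∈ T, phi p (zp i) := by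
      apply topk_sum_ge _ (fun i => phi_nonneg p (zp i)) _ (by omega)
      intro i hi j hj
      exact phi_mono hp (hTtop i hi j hj)
    have htot := Finset.sum_add_sum_compl Sp (fun i => phi p (zp i))
    have htot2 := Finset.sum_add_sum_compl T (fun i => phi p (zp i))
    have hdenT : (0:ℝ) < ∑ i ∈ Tᶜ, phi p (zp i) := ker_denom_pos hspark hk hzp hzp0 hTk p
    unfold theta
    apply div_le_div₀ (Finset.sum_nonneg fun i _ => phi_nonneg p (zp i)) hnum hdenT
    linarith
  -- step 2: rescale
  set w : Fin N → ℝ := t⁻¹ • zp with hw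
  have hwk : A.mulVec w = 0 := by rw [hw, Matrix.mulVec_smul, hzp, smul_zero]
  have hw0 : w ≠ 0 := smul_ne_zero (inv_ne_zero htne) hzp0
  have hscale : theta p w T = theta p zp T := theta_smul p (inv_ne_zero htne) zp T
  have hwabs : ∀ i, |w i| = t⁻¹ * |zp i| := by
    intro i
    rw [hw]
    simp only [Pi.smul_apply, smul_eq_mul, abs_mul, abs_inv]
    rw [abs_of_pos ht]
  have hwT : ∀ i ∈ T, 1 ≤ |w i| := by
    intro i hi
    rw [hwabs i]
    calc (1:ℝ) = t⁻¹ * t := (inv_mul_cancel₀ htne).symm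
    _ ≤ t⁻¹ * |zp i| := mul_le_mul_of_nonneg_left (hi0min i hi) (inv_nonneg.2 ht.le)
  have hwO : ∀ j ∉ T, |w j| ≤ 1 := by
    intro j hj
    rw [hwabs j]
    calc t⁻¹ * |zp j| ≤ t⁻¹ * t :=
      mul_le_mul_of_nonneg_left (hTtop i0 hi0T j hj) (inv_nonneg.2 ht.le)
    _ = 1 := inv_mul_cancel₀ htne
  -- termwise comparisons
  have hwTne : ∀ i ∈ T, w i ≠ 0 := by
    intro i hi h0
    have h1 := hwT i hi
    rw [h0] at h1
    norm_num at h1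
  have hnum2 : ∑ i ∈ T, phi p (w i) ≤ ∑ i ∈ T, phi q (w i) := by
    apply Finset.sum_le_sum
    intro i hi
    unfold phi
    rw [if_neg (hwTne i hi), if_neg (hwTne i hi)]
    exact Real.rpow_le_rpow_of_exponent_le (hwT i hi) hpq.le
  have hden2 : ∑ i ∈ Tᶜ, phi q (w i) ≤ ∑ i ∈ Tᶜ, phi p (w i) := by
    apply Finset.sum_le_sum
    intro j hj
    rcases eq_or_ne (w j) 0 with h0 | h0
    · simp [h0, phi]
    · unfold phi
      rw [if_neg h0, if_neg h0]
      exact Real.rpow_le_rpow_of_exponent_ge (abs_pos.2 h0) (hwO j (Finset.mem_compl.1 hj)) hpq.le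
  have hnum_pos : (0:ℝ) < ∑ i ∈ T, phi p (w i) :=
    Finset.sum_pos' (fun i _ => phi_nonneg p (w i)) ⟨i0, hi0T, phi_pos p (hwTne i0 hi0T)⟩
  have hden_q_pos : (0:ℝ) < ∑ i ∈ Tᶜ, phi q (w i) := ker_denom_pos hspark hk hwk hw0 hTk q
  -- strictness
  obtain ⟨i1, j1, hi1, hj1, hne1⟩ : ∃ i j, w i ≠ 0 ∧ w j ≠ 0 ∧ |w i| ≠ |w j| := by
    have h := hker w hwk hw0
    push_neg at h
    exact h
  have hex : ∃ i, w i ≠ 0 ∧ |w i| ≠ 1 := by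
    by_cases h : |w i1| = 1
    · exact ⟨j1, hj1, fun hc => hne1 (by rw [h, hc])⟩
    · exact ⟨i1, hi1, h⟩
  obtain ⟨i2, hi2ne, hi2⟩ := hex
  have hstrict : theta p w T < theta q w T := by
    unfold theta
    by_cases hi2T : i2 ∈ T
    · have h1lt : 1 < |w i2| := lt_of_le_of_ne (hwT i2 hi2T) (Ne.symm hi2)
      have hnumstrict : ∑ i ∈ T, phi p (w i) < ∑ i ∈ T, phi q (w i) := by
        apply Finset.sum_lt_sum
        · intro i hi
          unfold phi
          rw [if_neg (hwTne i hi), if_neg (hwTne i hi)]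
          exact Real.rpow_le_rpow_of_exponent_le (hwT i hi) hpq.le
        · refine ⟨i2, hi2T, ?_⟩
          unfold phi
          rw [if_neg hi2ne, if_neg hi2ne]
          exact Real.rpow_lt_rpow_of_exponent_lt h1lt hpq
      exact div_lt_div_strict hnumstrict.le hden2 hnum_pos hden_q_pos (Or.inl hnumstrict)
    · have h1lt : |w i2| < 1 := lt_of_le_of_ne (hwO i2 hi2T) hi2
      have hdenstrict : ∑ i ∈ Tᶜ, phi q (w i) < ∑ i ∈ Tᶜ, phi p (w i) := by
        apply Finset.sum_lt_sum
        · intro j hj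
          rcases eq_or_ne (w j) 0 with h0 | h0
          · simp [h0, phi]
          · unfold phi
            rw [if_neg h0, if_neg h0]
            exact Real.rpow_le_rpow_of_exponent_ge (abs_pos.2 h0)
              (hwO j (Finset.mem_compl.1 hj)) hpq.le
        · refine ⟨i2, Finset.mem_compl.2 hi2T, ?_⟩
          unfold phi
          rw [if_neg hi2ne, if_neg hi2ne]
          exact Real.rpow_lt_rpow_of_exponent_gt (abs_pos.2 hi2ne) h1lt hpq
      exact div_lt_div_strict hnum2 hdenstrict.le hnum_pos hden_q_pos (Or.inr hdenstrict)
  calc sInf (validNSC A p k) = theta p zp Sp := hgp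
  _ ≤ theta p zp T := hstep1
  _ = theta p w T := hscale.symm
  _ < theta q w T := hstrict
  _ ≤ theta q zq Sq := hmaxq w T hwk hw0 hTk
  _ = sInf (validNSC A q k) := hgq.symm
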